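/- For real q > 1 and even n, \eta_n q^{-n/2} \sum over places v of \mathbb{F}_q(X) with deg v | n/2 of \frac{deg v}{1 + q^{-deg v}} = \eta_n (1 - \frac{1}{1+q^{n/2}}) + O(q^{-n/4}), with implied constant depending only on q. -/

import Mathlib

noncomputable section

/-- Monic irreducible polynomials over `F`: the finite places of `F(X)`. -/
def MonicIrred (F : Type) [Field F] : Type := {p : Polynomial F // p.Monic ∧ Irreducible p}

/-- Places of the rational function field `F(X)`: the monic irreducible polynomials
together with the place at infinity (`none`). -/
def FFPlace (F : Type) [Field F] : Type := Option (MonicIrred F)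

/-- Degree of a place. -/
def FFPlace.deg {F : Type} [Field F] : FFPlace F → ℕ
  | none => 1
  | some p => p.1.natDegree

/-- Number of places of `F(X)` of degree `d`. -/
def Nplaces (F : Type) [Field F] (d : ℕ) : ℕ :=
  Nat.card {v : FFPlace F // v.deg = d}

/-! Since `X ^ q ^ m - X` is squarefree and its monic irreducible factors are exactly the
monic irreducibles of degree dividing `m`, comparing degrees gives `∑_{d ∣ m} d π_q(d) = q ^ m`;
with the place at infinity, `∑_{d ∣ m} d N_d = q ^ m + 1` and `d N_d ≤ q ^ d + 1`. Writing
`d N_d / (1 + q⁻ᵈ) = d N_d - d N_d / (q ^ d + 1)`, each correction lies in `[0, 1]`, so for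
`n = 2m` the sum is `q ^ m + 1 - R` with `0 ≤ R ≤ m`. Dividing by `q ^ m` leaves an error
`O(m q⁻ᵐ) = O(q^{-m/2}) = O(q^{-n/4})`. -/

open Polynomial UniqueFactorizationMonoid

section GaussCount

variable {F : Type*} [Field F] [Fintype F]

local notation "q" => Fintype.card F

theorem mem_primeFactors_X_pow_card_pow_sub_X_iff [DecidableEq F] {m : ℕ} (hm : m ≠ 0)
    {p : F[X]} :
    p ∈ primeFactors (X ^ q ^ m - X) ↔ p.Monic ∧ Irreducible p ∧ p.natDegree ∣ m := by
  rw [mem_primeFactors, Polynomial.mem_normalizedFactors_iff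
    (FiniteField.X_pow_card_pow_sub_X_ne_zero F hm Fintype.one_lt_card),
    ← Nat.card_eq_fintype_card]
  exact ⟨fun ⟨hirr, hmonic, hdvd⟩ =>
      ⟨hmonic, hirr, hirr.natDegree_dvd_of_dvd_X_pow_card_pow_sub_X hdvd⟩,
    fun ⟨hmonic, hirr, hdvd⟩ =>
      ⟨hirr, hmonic, hirr.natDegree_dvd_iff_dvd_X_pow_card_pow_sub_X.1 hdvd⟩⟩

theorem squarefree_X_pow_card_pow_sub_X {m : ℕ} (hm : m ≠ 0) :
    Squarefree (X ^ q ^ m - X : F[X]) := by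
  obtain ⟨n, -, hcard⟩ := FiniteField.card F (ringChar F)
  have : CharP F (ringChar F) := ringChar.charP F
  refine (galois_poly_separable (ringChar F) _ ?_).squarefree
  rw [hcard, ← pow_mul]
  exact dvd_pow_self _ (mul_ne_zero n.ne_zero hm)

theorem sum_natDegree_primeFactors_X_pow_card_pow_sub_X [DecidableEq F] {m : ℕ} (hm : m ≠ 0) :
    ∑ p ∈ primeFactors (X ^ q ^ m - X : F[X]), p.natDegree = q ^ m := by
  have hmonic : (X ^ q ^ m - X : F[X]).Monic :=
    monic_X_pow_sub (by rw [degree_X]; exact_mod_cast Nat.one_lt_pow hm Fintype.one_lt_card)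
  have hnodup := (squarefree_iff_nodup_normalizedFactors
    (FiniteField.X_pow_card_pow_sub_X_ne_zero F hm Fintype.one_lt_card)).1
    (squarefree_X_pow_card_pow_sub_X hm)
  rw [← toFinset_normalizedFactors, Finset.sum_eq_multiset_sum, Multiset.toFinset_val,
    hnodup.dedup, ← natDegree_multiset_prod_of_monic _ fun p hp =>
      ((mem_primeFactors_X_pow_card_pow_sub_X_iff hm).1 (mem_primeFactors.2 hp)).1]
  conv_rhs => rw [← FiniteField.X_pow_card_pow_sub_X_natDegree_eq F hm Fintype.one_lt_card,
    ← leadingCoeff_mul_prod_normalizedFactors (X ^ q ^ m - X), hmonic.leadingCoeff, C_1, one_mul]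

end GaussCount

theorem div_one_add_inv_eq_sub_div {K : Type*} [Field K] (a : K) {x : K} (hx : x ≠ 0)
    (hx1 : x + 1 ≠ 0) : a / (1 + x⁻¹) = a - a / (x + 1) := by
  field_simp
  ring

section Places

variable {F : Type} [Field F] [Fintype F]

local notation "q" => Fintype.card F

def monicIrredDegreeEquiv [DecidableEq F] {m d : ℕ} (hm : m ≠ 0) (hd : d ∣ m) :
    {p : MonicIrred F // p.1.natDegree = d} ≃
      {p // p ∈ (primeFactors (X ^ q ^ m - X : F[X])).filter (·.natDegree = d)} where
  toFun p := ⟨p.1.1, Finset.mem_filter.2 ⟨(mem_primeFactors_X_pow_card_pow_sub_X_iff hm).2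
    ⟨p.1.2.1, p.1.2.2, by rw [p.2]; exact hd⟩, p.2⟩⟩
  invFun p :=
    have hp := Finset.mem_filter.1 p.2
    have hp' := (mem_primeFactors_X_pow_card_pow_sub_X_iff hm).1 hp.1
    ⟨⟨p.1, hp'.1, hp'.2.1⟩, hp.2⟩
  left_inv _ := rfl
  right_inv _ := rfl

theorem sum_divisors_mul_card_monicIrred {m : ℕ} (hm : m ≠ 0) :
    ∑ d ∈ m.divisors, d * Nat.card {p : MonicIrred F // p.1.natDegree = d} = q ^ m := by
  classical
  rw [← sum_natDegree_primeFactors_X_pow_card_pow_sub_X hm,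
    ← Finset.sum_fiberwise_of_maps_to (g := natDegree) (t := m.divisors) fun p hp =>
      Nat.mem_divisors.2 ⟨((mem_primeFactors_X_pow_card_pow_sub_X_iff hm).1 hp).2.2, hm⟩]
  refine Finset.sum_congr rfl fun d hd => ?_
  rw [Nat.card_congr (monicIrredDegreeEquiv hm (Nat.dvd_of_mem_divisors hd)),
    Nat.card_eq_finsetCard, Finset.sum_congr rfl fun p hp => (Finset.mem_filter.1 hp).2,
    Finset.sum_const, smul_eq_mul, mul_comm]

theorem Nplaces_eq {d : ℕ} (hd : d ≠ 0) :
    Nplaces F d = Nat.card {p : MonicIrred F // p.1.natDegree = d} + if d = 1 then 1 else 0 := by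
  classical
  have : Finite {p : MonicIrred F // p.1.natDegree = d} :=
    Finite.of_equiv _ (monicIrredDegreeEquiv hd dvd_rfl).symm
  let e : {v : FFPlace F // v.deg = d} ≃
      {p : MonicIrred F // p.1.natDegree = d} ⊕ {_u : PUnit.{1} // 1 = d} :=
    (Equiv.optionEquivSumPUnit (MonicIrred F)).subtypeEquivOfSubtype'.trans Equiv.subtypeSum
  rw [Nplaces, Nat.card_congr e, Nat.card_sum]
  congr 1
  by_cases h : d = 1 <;> simp [h, eq_comm]

theorem mul_Nplaces_le {d : ℕ} (hd : d ≠ 0) : d * Nplaces F d ≤ q ^ d + 1 := by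
  have hle : d * Nat.card {p : MonicIrred F // p.1.natDegree = d} ≤ q ^ d :=
    sum_divisors_mul_card_monicIrred (F := F) hd ▸
      Finset.single_le_sum (f := fun e => e * Nat.card {p : MonicIrred F // p.1.natDegree = e})
        (fun _ _ => Nat.zero_le _) (Nat.mem_divisors_self d hd)
  have hinf : d * (if d = 1 then 1 else 0) ≤ 1 := by split_ifs with h <;> simp [h]
  rw [Nplaces_eq hd, Nat.mul_add]
  omega

theorem sum_divisors_mul_Nplaces {m : ℕ} (hm : m ≠ 0) :
    ∑ d ∈ m.divisors, d * Nplaces F d = q ^ m + 1 := by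
  rw [Finset.sum_congr rfl fun d hd => by
      rw [Nplaces_eq (Nat.pos_of_mem_divisors hd).ne', Nat.mul_add],
    Finset.sum_add_distrib, sum_divisors_mul_card_monicIrred hm]
  simp [hm]

theorem sum_Nplaces_mul_div_one_add_inv_mem_Icc {m : ℕ} (hm : m ≠ 0) :
    ∑ d ∈ m.divisors, (Nplaces F d : ℝ) * d / (1 + ((q : ℝ) ^ d)⁻¹) ∈
      Set.Icc ((q : ℝ) ^ m + 1 - m) ((q : ℝ) ^ m + 1) := by
  have hq : (0 : ℝ) < q := by positivity
  have herr :
      ∀ d ∈ m.divisors, (Nplaces F d : ℝ) * d / ((q : ℝ) ^ d + 1) ∈ Set.Icc 0 1 := by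
    intro d hd
    refine ⟨by positivity, div_le_one_of_le₀ ?_ (by positivity)⟩
    exact_mod_cast (mul_comm _ _).trans_le (mul_Nplaces_le (Nat.pos_of_mem_divisors hd).ne')
  have hmain : ∑ d ∈ m.divisors, (Nplaces F d : ℝ) * d = (q : ℝ) ^ m + 1 := by
    exact_mod_cast (Finset.sum_congr rfl fun d _ => mul_comm _ _).trans
      (sum_divisors_mul_Nplaces (F := F) hm)
  rw [Finset.sum_congr rfl fun d _ => div_one_add_inv_eq_sub_div _ (pow_pos hq d).ne'
    (by positivity), Finset.sum_sub_distrib, hmain]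
  have hcard : (m.divisors.card : ℝ) ≤ m := mod_cast Nat.card_divisors_le_self m
  constructor
  · have := Finset.sum_le_sum fun d hd => (herr d hd).2
    simp only [Finset.sum_const, nsmul_eq_mul, mul_one] at this
    linarith
  · linarith [Finset.sum_nonneg fun d hd => (herr d hd).1]

end Places

theorem abs_inv_mul_sub_one_sub_le {x S r : ℝ} (hx : 0 < x)
    (hS : S ∈ Set.Icc (x + 1 - r) (x + 1)) :
    |x⁻¹ * S - (1 - 1 / (1 + x))| ≤ (r + 2) / x := by
  have h1 : 1 / (1 + x) ≤ x⁻¹ := by rw [one_div]; exact inv_anti₀ hx (by linarith)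
  have h2 : 0 ≤ 1 / (1 + x) := by positivity
  have hlo : x⁻¹ * (x + 1 - r) ≤ x⁻¹ * S := mul_le_mul_of_nonneg_left hS.1 (by positivity)
  have hhi : x⁻¹ * S ≤ x⁻¹ * (x + 1) := mul_le_mul_of_nonneg_left hS.2 (by positivity)
  have hx' : x⁻¹ * x = 1 := inv_mul_cancel₀ hx.ne'
  rw [abs_le, div_eq_mul_inv]
  constructor <;> nlinarith

theorem nat_add_two_le_five_mul_sqrt_pow {Q : ℝ} (hQ : 2 ≤ Q) (m : ℕ) :
    (m : ℝ) + 2 ≤ 5 * √Q ^ m := by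
  have hs : 7 / 5 ≤ √Q := Real.le_sqrt_of_sq_le (by linarith)
  have := one_add_mul_le_pow (a := √Q - 1) (by linarith) m
  rw [add_sub_cancel] at this
  nlinarith [(Nat.cast_nonneg m : (0 : ℝ) ≤ m)]

theorem abs_rpow_neg_half_mul_sub_le {Q S : ℝ} (hQ : 2 ≤ Q) (m : ℕ)
    (hS : S ∈ Set.Icc (Q ^ m + 1 - m) (Q ^ m + 1)) :
    |Q ^ (-(↑(m + m) : ℝ) / 2) * S - (1 - 1 / (1 + Q ^ ((↑(m + m) : ℝ) / 2)))| ≤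
      5 * Q ^ (-(↑(m + m) : ℝ) / 4) := by
  have hQm : 0 < Q ^ m := by positivity
  have hhalf : Q ^ ((↑(m + m) : ℝ) / 2) = Q ^ m := by
    rw [Nat.cast_add, add_self_div_two, Real.rpow_natCast]
  have hneg_half : Q ^ (-(↑(m + m) : ℝ) / 2) = (Q ^ m)⁻¹ := by
    rw [neg_div, Real.rpow_neg (by positivity), hhalf]
  have hneg_quarter : Q ^ (-(↑(m + m) : ℝ) / 4) = (√Q ^ m)⁻¹ := by
    rw [show -(↑(m + m) : ℝ) / 4 = -(1 / 2 * m) by push_cast; ring,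
      Real.rpow_neg (by positivity), Real.rpow_mul (by positivity), ← Real.sqrt_eq_rpow,
      Real.rpow_natCast]
  rw [hhalf, hneg_half, hneg_quarter]
  calc _ ≤ ((m : ℝ) + 2) / Q ^ m := abs_inv_mul_sub_one_sub_le hQm hS
    _ ≤ 5 * √Q ^ m / Q ^ m := by gcongr; exact nat_add_two_le_five_mul_sqrt_pow hQ m
    _ = 5 * (√Q ^ m)⁻¹ := by
        have hsqrt : Q ^ m = (√Q ^ m) ^ 2 := by
          rw [← pow_mul, mul_comm, pow_mul, Real.sq_sqrt (by positivity)]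
        have : 0 < √Q ^ m := by positivity
        rw [hsqrt]
        field_simp

/-- Main term of the hyperelliptic trace moments: for even `n ≥ 1`,
`q^{-n/2} ∑_{deg v ∣ n/2} deg v/(1+q^{-deg v}) = 1 - 1/(1+q^{n/2}) + O(q^{-n/4})`,
with implied constant depending only on `q`. -/
theorem stmt12 (F : Type) [Field F] [Fintype F] :
    ∃ C : ℝ, ∀ n : ℕ, 1 ≤ n → Even n →
      |(Fintype.card F : ℝ) ^ (-(n : ℝ) / 2)
            * ∑ d ∈ (n / 2).divisors,
                (Nplaces F d : ℝ) * d / (1 + ((Fintype.card F : ℝ) ^ d)⁻¹)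
          - (1 - 1 / (1 + (Fintype.card F : ℝ) ^ ((n : ℝ) / 2)))|
        ≤ C * (Fintype.card F : ℝ) ^ (-(n : ℝ) / 4) := by
  refine ⟨5, fun n hn ⟨m, hnm⟩ => ?_⟩
  subst hnm
  rw [show (m + m) / 2 = m by omega]
  exact abs_rpow_neg_half_mul_sub_le (by exact_mod_cast Fintype.one_lt_card) m
    (sum_Nplaces_mul_div_one_add_inv_mem_Icc (by omega))
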